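/- Let f : ℝⁿ → ℝ be convex differentiable with L-Lipschitz gradient, g proper closed convex, F = f + g, ε ≥ 0, ρ > 0. Suppose x̃ satisfies the inexact proximal gradient inclusion 0 ∈ ∇f(x) − ρ(x − x̃) + ∂_ε g(x̃). Then ‖x − x̃‖ ≥ (L + ρ)⁻¹ · dist(0, ∂_ε F(x̃)). -/

import Mathlib

open scoped RealInnerProductSpace

/-- The ε-subdifferential of `g` at `xb`. -/
def epsSubdiff {n : ℕ} (g : EuclideanSpace ℝ (Fin n) → EReal) (ε : ℝ)
    (xb : EuclideanSpace ℝ (Fin n)) : Set (EuclideanSpace ℝ (Fin n)) :=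
  {v | ∀ x, ((⟪v, x - xb⟫ : ℝ) : EReal) + g xb ≤ g x + (ε : EReal)}

/-- First-order condition for a convex differentiable function. -/
lemma grad_ineq {n : ℕ} (f : EuclideanSpace ℝ (Fin n) → ℝ)
    (hf : ConvexOn ℝ Set.univ f) (xt z : EuclideanSpace ℝ (Fin n))
    (w : EuclideanSpace ℝ (Fin n)) (hw : HasGradientAt f w xt) :
    ⟪w, z - xt⟫ + f xt ≤ f z := by
  set φ : ℝ → ℝ := fun t => f (xt + t • (z - xt)) with hφ
  have hφc : ConvexOn ℝ Set.univ φ := by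
    have haff : ConvexOn ℝ ((fun t : ℝ => xt + t • (z - xt)) ⁻¹' Set.univ)
        (f ∘ (AffineMap.lineMap xt z : ℝ →ᵃ[ℝ] _)) := by
      refine hf.comp_affineMap _ |>.subset ?_ ?_
      · intro t _; trivial
      · exact convex_univ
    have : Set.univ ⊆ ((fun t : ℝ => xt + t • (z - xt)) ⁻¹' Set.univ) := by
      intro t _; trivial
    refine ((hf.comp_affineMap (AffineMap.lineMap xt z)).subset
      (by intro t _; trivial) convex_univ).congr ?_
    intro t _
    simp [hφ, AffineMap.lineMap_apply]
    congr 1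
    module
  have hc : HasDerivAt (fun t : ℝ => xt + t • (z - xt)) (z - xt) 0 := by
    simpa using ((hasDerivAt_id (0:ℝ)).smul_const (z - xt)).const_add xt
  have hd : HasDerivAt φ ⟪w, z - xt⟫ 0 := by
    have hw2 : HasFDerivAt f ((InnerProductSpace.toDual ℝ _) w)
        (xt + (0:ℝ) • (z - xt)) := by simpa using hw.hasFDerivAt
    have := hw2.comp_hasDerivAt 0 hc
    simp [InnerProductSpace.toDual] at this
    exact this
  have := hφc.le_slope_of_hasDerivAt (Set.mem_univ 0) (Set.mem_univ 1)
    (by norm_num) hd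
  have hslope : slope φ 0 1 = f z - f xt := by
    simp [slope, hφ]
  rw [hslope] at this
  linarith

/-- **Proximal gradient residual.** Let `f` be convex differentiable with
`L`-Lipschitz gradient, `g` proper closed convex, `F = f + g`, `ε ≥ 0`,
`ρ > 0`. If `x̃` satisfies `0 ∈ ∇f(x) − ρ(x − x̃) + ∂_ε g(x̃)`, then
`‖x − x̃‖ ≥ (L + ρ)⁻¹ · dist(0, ∂_ε F(x̃))`. -/
theorem stmt3 {n : ℕ} (f : EuclideanSpace ℝ (Fin n) → ℝ) (L : ℝ)
    (hf : ConvexOn ℝ Set.univ f)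
    (f' : EuclideanSpace ℝ (Fin n) → EuclideanSpace ℝ (Fin n))
    (hf' : ∀ x, HasGradientAt f (f' x) x)
    (hlip : ∀ x y, ‖f' x - f' y‖ ≤ L * ‖x - y‖)
    (g : EuclideanSpace ℝ (Fin n) → EReal)
    (hlsc : LowerSemicontinuous g)
    (hconv : Convex ℝ {p : EuclideanSpace ℝ (Fin n) × ℝ | g p.1 ≤ (p.2 : EReal)})
    (hproper_top : ∃ x, g x ≠ ⊤) (hproper_bot : ∀ x, g x ≠ ⊥)
    (ε ρ : ℝ) (hε : 0 ≤ ε) (hρ : 0 < ρ)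
    (x xt : EuclideanSpace ℝ (Fin n))
    (hincl : ∃ v ∈ epsSubdiff g ε xt, f' x - ρ • (x - xt) + v = 0) :
    (L + ρ)⁻¹ *
        Metric.infDist 0 (epsSubdiff (fun z => (f z : EReal) + g z) ε xt) ≤
      ‖x - xt‖ := by
  obtain ⟨v, hv, heq⟩ := hincl
  set w : EuclideanSpace ℝ (Fin n) := f' xt + v with hw
  -- w belongs to the ε-subdifferential of F at xt
  have hmem : w ∈ epsSubdiff (fun z => (f z : EReal) + g z) ε xt := by
    intro z
    have hA : ⟪f' xt, z - xt⟫ + f xt ≤ f z := grad_ineq f hf xt z _ (hf' xt)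
    have hB := hv z
    have hsplit : (⟪w, z - xt⟫ : ℝ) = ⟪f' xt, z - xt⟫ + ⟪v, z - xt⟫ := by
      simp [hw, inner_add_left]
    rw [hsplit]
    push_cast
    calc ((⟪f' xt, z - xt⟫ : ℝ) : EReal) + ((⟪v, z - xt⟫ : ℝ) : EReal)
          + ((f xt : EReal) + g xt)
        = (((⟪f' xt, z - xt⟫ + f xt : ℝ) : EReal))
          + (((⟪v, z - xt⟫ : ℝ) : EReal) + g xt) := by
          push_cast; abel
      _ ≤ ((f z : ℝ) : EReal) + (g z + (ε : EReal)) :=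
          add_le_add (by exact_mod_cast hA) hB
      _ = ((f z : EReal) + g z) + (ε : EReal) := by abel
  -- bound on ‖w‖
  have hv_eq : v = ρ • (x - xt) - f' x := by
    have := heq
    apply eq_sub_of_add_eq
    linear_combination (norm := module) this
  have hwnorm : ‖w‖ ≤ (L + ρ) * ‖x - xt‖ := by
    have h1 : w = (f' xt - f' x) + ρ • (x - xt) := by
      rw [hw, hv_eq]; module
    have h2 : ‖f' xt - f' x‖ ≤ L * ‖x - xt‖ := by
      have := hlip xt x
      rwa [show ‖xt - x‖ = ‖x - xt‖ from norm_sub_rev _ _] at this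
    calc ‖w‖ ≤ ‖f' xt - f' x‖ + ‖ρ • (x - xt)‖ := by rw [h1]; exact norm_add_le _ _
      _ ≤ L * ‖x - xt‖ + ρ * ‖x - xt‖ := by
          refine add_le_add h2 ?_
          rw [norm_smul, Real.norm_eq_abs, abs_of_pos hρ]
      _ = (L + ρ) * ‖x - xt‖ := by ring
  have hdist : Metric.infDist 0 (epsSubdiff (fun z => (f z : EReal) + g z) ε xt)
      ≤ (L + ρ) * ‖x - xt‖ := by
    calc Metric.infDist 0 _ ≤ dist 0 w := Metric.infDist_le_dist_of_mem hmem
      _ = ‖w‖ := by simp [dist_eq_norm]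
      _ ≤ (L + ρ) * ‖x - xt‖ := hwnorm
  rcases le_or_gt (L + ρ) 0 with hLρ | hLρ
  · have h0 : Metric.infDist 0 (epsSubdiff (fun z => (f z : EReal) + g z) ε xt) = 0 :=
      le_antisymm (hdist.trans (mul_nonpos_of_nonpos_of_nonneg hLρ (norm_nonneg _)))
        Metric.infDist_nonneg
    rw [h0, mul_zero]
    exact norm_nonneg _
  · rw [inv_mul_le_iff₀ hLρ] at *
    linarith [hdist]
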